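/- arXiv:2012.06286 — 3 statements merged into one kernel-verified Lean document; each statement's English description precedes it below -/
import Mathlib

section
/- Let (σⁿ)_{n∈ℕ} be a sequence of pairwise distinct branches of 𝒯. Then there exist an infinite set M ⊆ ℕ and natural numbers (l_n)_{n∈M} such that the final segments σⁿ_{>l_n}, n ∈ M, are pairwise incomparable. -/
open Set Filter Topology

/-- `k` is an immediate successor of `n` in the order `le`. -/
def ImmSucc (le : ℕ → ℕ → Prop) (n k : ℕ) : Prop :=
  le n k ∧ n ≠ k ∧ ∀ m, le n m → le m k → m = n ∨ m = k

/-- The tree `𝒯`: a partial order on `ℕ` compatible with the usual order, in which the set of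
strict predecessors of every element is finite and linearly ordered, and every element has
infinitely many immediate successors. -/
structure IsJTTree (le : ℕ → ℕ → Prop) : Prop where
  refl : ∀ n, le n n
  antisymm : ∀ {m n}, le m n → le n m → m = n
  trans : ∀ {a b c}, le a b → le b c → le a c
  compat : ∀ {m n}, le m n → m ≤ n
  pred_finite : ∀ n, {m | le m n ∧ m ≠ n}.Finite
  pred_linear : ∀ n a b, le a n → le b n → le a b ∨ le b a
  succ_infinite : ∀ n, {k | ImmSucc le n k}.Infinite

/-- A segment of the tree: a nonempty set of the form `{k : m ⪯ k ∧ k ⪯ n}`. -/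
def IsSegment (le : ℕ → ℕ → Prop) (s : Set ℕ) : Prop :=
  ∃ m n, le m n ∧ s = {k | le m k ∧ le k n}

/-- A branch: a maximal linearly ordered subset of `ℕ`. -/
def IsBranch (le : ℕ → ℕ → Prop) (σ : Set ℕ) : Prop :=
  IsChain le σ ∧ ∀ τ, IsChain le τ → σ ⊆ τ → σ = τ

/-- `‖x‖_s = (∑_{i ∈ s} x(i)²)^(1/2)`. -/
noncomputable def segNorm (x : ℕ → ℝ) (s : Set ℕ) : ℝ :=
  Real.sqrt (∑' i, s.indicator (fun j => (x j) ^ 2) i)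

/-- The `JT_{2,p}` norm on finitely supported sequences:
`‖x‖ = sup {(∑_k ‖x‖_{s_k}^p)^(1/p) : s₁,…,s_n pairwise disjoint segments}`. -/
noncomputable def jtNorm (le : ℕ → ℕ → Prop) (p : ℝ) (x : ℕ → ℝ) : ℝ :=
  sSup { r : ℝ | ∃ (n : ℕ) (s : Fin n → Set ℕ),
    (∀ k, IsSegment le (s k)) ∧
    (∀ k l, k ≠ l → Disjoint (s k) (s l)) ∧
    r = (∑ k : Fin n, segNorm x (s k) ^ p) ^ (1 / p) }

/-- A block sequence of finitely supported vectors. -/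
def IsBlockSeq (x : ℕ → ℕ → ℝ) : Prop :=
  (∀ n, (Function.support (x n)).Finite) ∧
  ∀ n i j, x n i ≠ 0 → x (n + 1) j ≠ 0 → i < j

/-- The final segment `σ_{>l} = {k ∈ σ : k > l}`. -/
def finalSeg (σ : Set ℕ) (l : ℕ) : Set ℕ := {k ∈ σ | l < k}

/-- Two final segments are incomparable when their least elements are `le`-incomparable. -/
def IncompFinal (le : ℕ → ℕ → Prop) (A B : Set ℕ) : Prop :=
  A.Nonempty ∧ B.Nonempty ∧ ¬ le (sInf A) (sInf B) ∧ ¬ le (sInf B) (sInf A)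

section Aux

variable {le : ℕ → ℕ → Prop}

lemma chain_total (hT : IsJTTree le) {s : Set ℕ} (hs : IsChain le s) {x y : ℕ}
    (hx : x ∈ s) (hy : y ∈ s) : le x y ∨ le y x := by
  rcases eq_or_ne x y with rfl | h
  · exact Or.inl (hT.refl x)
  · exact hs hx hy h

lemma branch_mem (hT : IsJTTree le) {σ : Set ℕ} (hσ : IsBranch le σ)
    {a : ℕ} (h : ∀ u ∈ σ, le a u ∨ le u a) : a ∈ σ := by
  have hch : IsChain le (insert a σ) := by
    intro x hx y hy hxy
    rcases hx with rfl | hx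
    · rcases hy with rfl | hy
      · exact absurd rfl hxy
      · exact h y hy
    · rcases hy with rfl | hy
      · exact (h x hx).symm
      · exact hσ.1 hx hy hxy
  have he := hσ.2 _ hch (Set.subset_insert _ _)
  rw [he]; exact Set.mem_insert _ _

lemma branch_dc (hT : IsJTTree le) {σ : Set ℕ} (hσ : IsBranch le σ)
    {a b : ℕ} (hb : b ∈ σ) (hab : le a b) : a ∈ σ := by
  apply branch_mem hT hσ
  intro u hu
  rcases chain_total hT hσ.1 hu hb with h1 | h2
  · exact hT.pred_linear b a u hab h1
  · exact Or.inl (hT.trans hab h2)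

end Aux

section Aux2
variable {le : ℕ → ℕ → Prop}

lemma branch_nonempty (hT : IsJTTree le) {σ : Set ℕ} (hσ : IsBranch le σ) : σ.Nonempty := by
  rcases σ.eq_empty_or_nonempty with h | h
  · exfalso
    have hch : IsChain le {0} := by
      intro x hx y hy hxy
      simp only [Set.mem_singleton_iff] at hx hy
      omega
    have := hσ.2 {0} hch (by rw [h]; exact Set.empty_subset _)
    rw [h] at this
    exact (Set.singleton_ne_empty 0) this.symm
  · exact h

lemma branch_infinite (hT : IsJTTree le) {σ : Set ℕ} (hσ : IsBranch le σ) : σ.Infinite := by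
  intro hfin
  obtain ⟨t, htσ, htmax⟩ : ∃ t ∈ σ, ∀ u ∈ σ, u ≤ t := by
    obtain ⟨t, ht, hmax⟩ := hfin.toFinset.exists_max_image id
      (by rw [Set.Finite.toFinset_nonempty]; exact branch_nonempty hT hσ)
    exact ⟨t, hfin.mem_toFinset.mp ht, fun u hu => hmax u (hfin.mem_toFinset.mpr hu)⟩
  have hut : ∀ u ∈ σ, le u t := by
    intro u hu
    rcases chain_total hT hσ.1 hu htσ with h | h
    · exact h
    · have : u = t := le_antisymm (htmax u hu) (hT.compat h)
      rw [this]; exact hT.refl t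
  obtain ⟨k, hk⟩ := (hT.succ_infinite t).nonempty
  have hkσ : k ∈ σ := branch_mem hT hσ (fun u hu => Or.inr (hT.trans (hut u hu) hk.1))
  exact hk.2.1 (le_antisymm (hT.compat hk.1) (htmax k hkσ))

end Aux2

section Aux3
variable {le : ℕ → ℕ → Prop}

lemma branch_inter_finite (hT : IsJTTree le) {σ τ : Set ℕ}
    (hσ : IsBranch le σ) (hτ : IsBranch le τ) (hne : σ ≠ τ) : (σ ∩ τ).Finite := by
  by_contra hinf
  have hinf' : (σ ∩ τ).Infinite := hinf
  apply hne
  apply hσ.2 τ hτ.1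
  intro a ha
  obtain ⟨c, hc, hc'⟩ := (hinf'.diff ((hT.pred_finite a).union (Set.finite_singleton a))).nonempty
  have hcne : c ≠ a := fun h => hc' (Or.inr h)
  have hnca : ¬ le c a := fun h => hc' (Or.inl ⟨h, hcne⟩)
  have hac : le a c := (chain_total hT hσ.1 ha hc.1).resolve_right hnca
  exact branch_dc hT hτ hc.2 hac

/-- if `a ∈ σ`, `a ∉ τ`, `b ∈ τ` then `¬ le a b`. -/
lemma branch_incomp (hT : IsJTTree le) {σ τ : Set ℕ}
    (hσ : IsBranch le σ) (hτ : IsBranch le τ) {a b : ℕ}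
    (ha : a ∈ σ) (ha' : a ∉ τ) (hb : b ∈ τ) (hab : le a b) : False := by
  apply ha'
  apply branch_mem hT hτ
  intro u hu
  rcases chain_total hT hτ.1 hu hb with h1 | h2
  · exact hT.pred_linear b a u hab h1
  · exact Or.inl (hT.trans hab h2)

lemma inter_nested (hT : IsJTTree le) {σ τ υ : Set ℕ}
    (hσ : IsBranch le σ) (hτ : IsBranch le τ) (hυ : IsBranch le υ) :
    σ ∩ τ ⊆ σ ∩ υ ∨ σ ∩ υ ⊆ σ ∩ τ := by
  by_contra h
  push_neg at h
  obtain ⟨h1, h2⟩ := h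
  obtain ⟨x, hx, hx'⟩ := Set.not_subset.mp h1
  obtain ⟨y, hy, hy'⟩ := Set.not_subset.mp h2
  have hxυ : x ∉ υ := fun h => hx' ⟨hx.1, h⟩
  have hyτ : y ∉ τ := fun h => hy' ⟨hy.1, h⟩
  rcases chain_total hT hσ.1 hx.1 hy.1 with h | h
  · exact hxυ (branch_dc hT hυ hy.2 h)
  · exact hyτ (branch_dc hT hτ hx.2 h)

lemma inter_ultra (hT : IsJTTree le) {σ τ υ : Set ℕ}
    (hσ : IsBranch le σ) (hτ : IsBranch le τ) (hυ : IsBranch le υ)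
    (hss : σ ∩ τ ⊂ σ ∩ υ) : τ ∩ υ = σ ∩ τ := by
  obtain ⟨hsub, hne⟩ := hss
  obtain ⟨t, ht, ht'⟩ := Set.not_subset.mp hne
  have htτ : t ∉ τ := fun h => ht' ⟨ht.1, h⟩
  ext x
  constructor
  · rintro ⟨hxτ, hxυ⟩
    rcases chain_total hT hυ.1 hxυ ht.2 with h | h
    · exact ⟨branch_dc hT hσ ht.1 h, hxτ⟩
    · exact absurd (branch_dc hT hτ hxτ h) htτ
  · rintro ⟨hxσ, hxτ⟩
    exact ⟨hxτ, (hsub ⟨hxσ, hxτ⟩).2⟩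

end Aux3

section Aux4
variable {le : ℕ → ℕ → Prop}

lemma final_step (hT : IsJTTree le) (σ : ℕ → Set ℕ) (hσ : ∀ n, IsBranch le (σ n))
    (M : Set ℕ) (hM : M.Infinite)
    (hex : ∀ m ∈ M, ∃ x, x ∈ σ m ∧ 1 ≤ x ∧ ∀ n ∈ M, n ≠ m → x ∉ σ n) :
    ∃ M : Set ℕ, M.Infinite ∧ ∃ l : ℕ → ℕ,
      ∀ m ∈ M, ∀ n ∈ M, m ≠ n →
        IncompFinal le (finalSeg (σ m) (l m)) (finalSeg (σ n) (l n)) := by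
  have hex' : ∀ m, ∃ x, m ∈ M → x ∈ σ m ∧ 1 ≤ x ∧ ∀ n ∈ M, n ≠ m → x ∉ σ n := by
    intro m
    by_cases hm : m ∈ M
    · obtain ⟨x, hx⟩ := hex m hm
      exact ⟨x, fun _ => hx⟩
    · exact ⟨0, fun h => absurd h hm⟩
  choose a ha using hex'
  refine ⟨M, hM, fun m => a m - 1, ?_⟩
  intro m hm n hn hmn
  obtain ⟨ham, ham1, hanot⟩ := ha m hm
  obtain ⟨han, han1, hbnot⟩ := ha n hn
  have key : ∀ (i j : ℕ), i ∈ M → 1 ≤ a i →  a i ∈ σ i →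
      (finalSeg (σ i) (a i - 1)).Nonempty ∧ sInf (finalSeg (σ i) (a i - 1)) = a i := by
    intro i j hi h1 hmem
    have hmemF : a i ∈ finalSeg (σ i) (a i - 1) := ⟨hmem, by omega⟩
    refine ⟨⟨a i, hmemF⟩, le_antisymm (Nat.sInf_le hmemF) ?_⟩
    have := Nat.sInf_mem (⟨a i, hmemF⟩ : (finalSeg (σ i) (a i - 1)).Nonempty)
    have h2 := this.2
    omega
  obtain ⟨hne1, hinf1⟩ := key m 0 hm ham1 ham
  obtain ⟨hne2, hinf2⟩ := key n 0 hn han1 han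
  refine ⟨hne1, hne2, ?_, ?_⟩
  · rw [hinf1, hinf2]
    intro hle
    exact branch_incomp hT (hσ m) (hσ n) ham (hanot n hn (Ne.symm hmn)) han hle
  · rw [hinf1, hinf2]
    intro hle
    exact branch_incomp hT (hσ n) (hσ m) han (hbnot m hm hmn) ham hle

end Aux4

theorem stmt14 (le : ℕ → ℕ → Prop) (hT : IsJTTree le)
    (σ : ℕ → Set ℕ) (hσ : ∀ n, IsBranch le (σ n))
    (hdist : Function.Injective σ) :
    ∃ M : Set ℕ, M.Infinite ∧ ∃ l : ℕ → ℕ,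
      ∀ m ∈ M, ∀ n ∈ M, m ≠ n →
        IncompFinal le (finalSeg (σ m) (l m)) (finalSeg (σ n) (l n)) := by
  by_cases hB : ∃ n₀, ∀ v : ℕ, ∃ n, n ≠ n₀ ∧ v < (σ n₀ ∩ σ n).ncard
  · -- Case B: branches accumulating at σ n₀
    obtain ⟨n₀, h⟩ := hB
    choose F hF1 hF2 using h
    set c : ℕ → ℕ := fun n => (σ n₀ ∩ σ n).ncard with hc
    let f : ℕ → ℕ := fun i => Nat.rec (F 0) (fun _ prev => F (c prev)) i
    have hfs : ∀ i, f (i + 1) = F (c (f i)) := fun i => rfl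
    have hfne : ∀ i, f i ≠ n₀ := by
      intro i; cases i with
      | zero => exact hF1 0
      | succ j => exact hF1 _
    have hg : StrictMono (fun i => c (f i)) := by
      apply strictMono_nat_of_lt_succ
      intro i
      rw [hfs i]
      exact hF2 (c (f i))
    have hfinj : Function.Injective f := fun i j hij => hg.injective (by simp [hij])
    have hfin : ∀ i, (σ n₀ ∩ σ (f i)).Finite :=
      fun i => branch_inter_finite hT (hσ n₀) (hσ (f i)) (fun hh => hfne i (hdist hh.symm))
    have hstrict : ∀ i j, i < j → σ n₀ ∩ σ (f i) ⊂ σ n₀ ∩ σ (f j) := by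
      intro i j hij
      have hclt : c (f i) < c (f j) := hg hij
      rcases inter_nested hT (hσ n₀) (hσ (f i)) (hσ (f j)) with hss | hss
      · refine hss.ssubset_of_ne (fun he => ?_)
        simp only [hc, he] at hclt
        omega
      · have := Set.ncard_le_ncard hss (hfin i)
        simp only [hc] at hclt
        omega
    have hultra : ∀ i j, i < j → σ (f i) ∩ σ (f j) = σ n₀ ∩ σ (f i) :=
      fun i j hij => inter_ultra hT (hσ n₀) (hσ (f i)) (hσ (f j)) (hstrict i j hij)
    apply final_step hT σ hσ (Set.range f) (Set.infinite_range_of_injective hfinj)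
    rintro m ⟨i, rfl⟩
    obtain ⟨x, hx, hx'⟩ :=
      ((branch_infinite hT (hσ (f i))).diff ((hfin i).union (Set.finite_singleton 0))).nonempty
    have hx0 : x ≠ 0 := fun h => hx' (Or.inr h)
    have hxI : x ∉ σ n₀ ∩ σ (f i) := fun h => hx' (Or.inl h)
    refine ⟨x, hx, by omega, ?_⟩
    rintro n ⟨j, rfl⟩ hne hxn
    have hji : j ≠ i := fun h => hne (by rw [h])
    rcases lt_or_gt_of_ne hji with hlt | hlt
    · -- j < i : σ (f j) ∩ σ (f i) = σ n₀ ∩ σ (f j) ⊆ σ n₀ ∩ σ (f i)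
      have h1 := hultra j i hlt
      exact hxI ((hstrict j i hlt).1 (h1 ▸ ⟨hxn, hx⟩))
    · -- i < j : σ (f i) ∩ σ (f j) = σ n₀ ∩ σ (f i)
      have h1 := hultra i j hlt
      exact hxI (h1 ▸ ⟨hx, hxn⟩)
  · -- Case A: all intersections with a fixed branch have bounded size
    push_neg at hB
    apply final_step hT σ hσ Set.univ Set.infinite_univ
    intro m _
    obtain ⟨v, hv⟩ := hB m
    set S : Set ℕ := {k | ∃ n, n ≠ m ∧ k = (σ m ∩ σ n).ncard} with hS
    have hSne : S.Nonempty := ⟨(σ m ∩ σ (m + 1)).ncard, m + 1, by omega, rfl⟩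
    have hbdd : BddAbove S := ⟨v, by rintro k ⟨n, hn, rfl⟩; exact hv n hn⟩
    obtain ⟨n', hn', hkeq⟩ := Nat.sSup_mem hSne hbdd
    have hfinm : ∀ n, n ≠ m → (σ m ∩ σ n).Finite :=
      fun n hn => branch_inter_finite hT (hσ m) (hσ n) (fun hh => hn (hdist hh.symm))
    have hmax : ∀ n, n ≠ m → σ m ∩ σ n ⊆ σ m ∩ σ n' := by
      intro n hn
      rcases inter_nested hT (hσ m) (hσ n) (hσ n') with hss | hss
      · exact hss
      · have hle : (σ m ∩ σ n).ncard ≤ (σ m ∩ σ n').ncard := by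
          rw [← hkeq]
          exact le_csSup hbdd ⟨n, hn, rfl⟩
        rw [Set.eq_of_subset_of_ncard_le hss hle (hfinm n hn)]
    obtain ⟨x, hx, hx'⟩ :=
      ((branch_infinite hT (hσ m)).diff ((hfinm n' hn').union (Set.finite_singleton 0))).nonempty
    have hx0 : x ≠ 0 := fun h => hx' (Or.inr h)
    have hxI : x ∉ σ m ∩ σ n' := fun h => hx' (Or.inl h)
    refine ⟨x, hx, by omega, ?_⟩
    intro n _ hn hxn
    exact hxI (hmax n hn ⟨hx, hxn⟩)
end

section
/- For each n ∈ ℕ let F_n = {σⁿ₁, …, σⁿ_{k_n}} be a finite family of pairwise distinct branches of 𝒯, where the families (F_n) are pairwise disjoint and (k_n) is strictly increasing to ∞. Then there exist an infinite set M ⊆ ℕ and natural numbers (l_m)_{m∈M} such that: for all m < m₁ < m₂ in M and every k ≤ k_m, the final segments σ^{m₁}_{k,>l_{m₁}} and σ^{m₂}_{k,>l_{m₂}} are incomparable. -/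
open Set Filter Topology

/-! View branches as points of the Cantor space `2^ℕ`. By compactness a subsequence of the
families converges coordinatewise, the `k`-th branches to a chain `β_k`. At most one of these
branches is contained in `β_k`, since it would then equal it. Any other one leaves `β_k` at
some node `s` that the later branches eventually avoid, so it meets all of them below `s`, and
the finitely many earlier ones in finite sets. Thin the subsequence so that no member is
exceptional for the indices `k < κ m` of a predecessor `m`, and take `l` above all these
bounds. Then two least elements above `l` cannot be comparable: branches are downward closed,
so the smaller one would be a common node above the bound. -/

def TendstoPointwise {α : Type*} (τ : ℕ → Set α) (β : Set α) : Prop :=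
  ∀ a, ∀ᶠ n in atTop, a ∈ τ n ↔ a ∈ β

theorem exists_subseq_tendstoPointwise {ι α : Type*} [Countable ι] [Countable α]
    (τ : ℕ → ι → Set α) :
    ∃ φ : ℕ → ℕ, StrictMono φ ∧
      ∃ β : ι → Set α, ∀ i, TendstoPointwise (fun n ↦ τ (φ n) i) (β i) := by
  classical
  obtain ⟨b, φ, hφ, hlim⟩ :=
    CompactSpace.tendsto_subseq fun n (i : ι) (a : α) ↦ decide (a ∈ τ n i)
  refine ⟨φ, hφ, fun i ↦ {a | b i a}, fun i a ↦ ?_⟩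
  have h := tendsto_pi_nhds.1 (tendsto_pi_nhds.1 hlim i) a
  rw [nhds_discrete, tendsto_pure] at h
  filter_upwards [h] with n hn
  simp [← hn]

theorem IsChain.of_tendstoPointwise {α : Type*} {r : α → α → Prop} {τ : ℕ → Set α}
    {β : Set α} (hτ : ∀ᶠ n in atTop, IsChain r (τ n)) (hlim : TendstoPointwise τ β) :
    IsChain r β := by
  intro a ha b hb hab
  obtain ⟨n, hn, han, hbn⟩ := (hτ.and ((hlim a).and (hlim b))).exists
  exact hn (han.2 ha) (hbn.2 hb) hab

theorem exists_strictMono_forall_lt_of_eventually {P : ℕ → ℕ → Prop}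
    (h : ∀ a, ∀ᶠ b in atTop, P a b) :
    ∃ ψ : ℕ → ℕ, StrictMono ψ ∧ ∀ i j, i < j → P (ψ i) (ψ j) := by
  have hnext : ∀ n, ∃ b, n < b ∧ ∀ a ≤ n, P a b := fun n ↦
    ((eventually_gt_atTop n).and ((finite_Iic n).eventually_all.2 fun a _ ↦ h a)).exists
  choose u hu_gt hu using hnext
  have hsucc : ∀ j, u^[j + 1] 0 = u (u^[j] 0) := fun j ↦ Function.iterate_succ_apply' u j 0
  have hmono : StrictMono fun j ↦ u^[j] 0 :=
    strictMono_nat_of_lt_succ fun j ↦ (hsucc j).symm ▸ hu_gt _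
  refine ⟨fun j ↦ u^[j] 0, hmono, fun i j hij ↦ ?_⟩
  obtain ⟨j, rfl⟩ := Nat.exists_eq_add_of_lt hij
  show P (u^[i] 0) (u^[i + j + 1] 0)
  rw [hsucc]
  exact hu _ _ (hmono.monotone (Nat.le_add_right i j))

theorem exists_uniform_bounds (I : ℕ → ℕ → ℕ → Set ℕ) (K : ℕ → ℕ)
    (hfin : ∀ i j, i < j → ∀ k < K i, (I i j k).Finite) :
    ∃ L : ℕ → ℕ, ∀ i j, i < j → ∀ k < K i, (∃ N, ∀ j', i < j' → I i j' k ⊆ Iic N) →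
      I i j k ⊆ Iic (L i) ∧ I i j k ⊆ Iic (L j) := by
  choose! N hN using fun i k (h : ∃ N, ∀ j', i < j' → I i j' k ⊆ Iic N) ↦ h
  choose! B hB using fun i j (hij : i < j) k (hk : k < K i) ↦ (hfin i j hij k hk).bddAbove
  refine ⟨fun j ↦ max ((Finset.range (K j)).sup (N j))
    ((Finset.range j).sup fun i ↦ (Finset.range (K i)).sup fun k ↦ B i j k), ?_⟩
  intro i j hij k hk hunif
  refine ⟨(hN i k hunif j hij).trans (Iic_subset_Iic.2 ?_),
    (mem_upperBounds_iff_subset_Iic.1 (hB i j hij k hk)).trans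
      (Iic_subset_Iic.2 ?_)⟩
  · exact le_max_of_le_left (Finset.le_sup (f := N i) (Finset.mem_range.2 hk))
  · refine le_max_of_le_right (le_trans ?_ (Finset.le_sup (Finset.mem_range.2 hij)))
    exact Finset.le_sup (f := fun k ↦ B i j k) (Finset.mem_range.2 hk)

namespace IsJTTree

variable {le : ℕ → ℕ → Prop}

theorem mem_of_le (hT : IsJTTree le) {x : Set ℕ} (hx : IsBranch le x) {a b : ℕ} (hb : b ∈ x)
    (hab : le a b) : a ∈ x := by
  have hchain : IsChain le (insert a x) := hx.1.insert fun c hc _ ↦ by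
    rcases eq_or_ne c b with rfl | hcb
    · exact Or.inl hab
    · rcases hx.1 hc hb hcb with h | h
      · exact hT.pred_linear b a c hab h
      · exact Or.inl (hT.trans hab h)
  exact hx.2 _ hchain (subset_insert a x) ▸ mem_insert a x

theorem branch_infinite (hT : IsJTTree le) {x : Set ℕ} (hx : IsBranch le x) : x.Infinite := by
  intro hfin
  have hne : x.Nonempty := nonempty_iff_ne_empty.2 fun h ↦ by
    simpa [h] using hx.2 {0} subsingleton_singleton.isChain (by simp [h])
  set n := sSup x
  have hn : n ∈ x := Nat.sSup_mem hne hfin.bddAbove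
  have htop : ∀ p ∈ x, le p n := fun p hp ↦ by
    rcases eq_or_ne p n with rfl | hpn
    · exact hT.refl _
    · refine (hx.1 hp hn hpn).resolve_right fun h ↦ hpn ?_
      exact le_antisymm (le_csSup hfin.bddAbove hp) (hT.compat h)
  obtain ⟨k, hnk, hkn, -⟩ := (hT.succ_infinite n).nonempty
  have hchain : IsChain le (insert k x) :=
    hx.1.insert fun p hp _ ↦ Or.inr (hT.trans (htop p hp) hnk)
  have hk : k ∈ x := hx.2 _ hchain (subset_insert k x) ▸ mem_insert k x
  exact hkn (hT.antisymm hnk (htop k hk))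

theorem inter_subset_Iio (hT : IsJTTree le) {x y : Set ℕ} (hx : IsChain le x)
    (hy : IsBranch le y) {s : ℕ} (hs : s ∈ x) (hsy : s ∉ y) : x ∩ y ⊆ Iio s := by
  rintro a ⟨hax, hay⟩
  have has : a ≠ s := by rintro rfl; exact hsy hay
  rcases hx hax hs has with h | h
  · exact (hT.compat h).lt_of_ne has
  · exact absurd (hT.mem_of_le hy hay h) hsy

theorem branch_inter_finite (hT : IsJTTree le) {x y : Set ℕ} (hx : IsBranch le x)
    (hy : IsBranch le y) (hxy : x ≠ y) : (x ∩ y).Finite := by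
  obtain ⟨s, hs, hsy⟩ := not_subset.1 fun h ↦ hxy (hx.2 y hy.1 h)
  exact (finite_Iio s).subset (hT.inter_subset_Iio hx.1 hy hs hsy)

theorem incompFinal_finalSeg (hT : IsJTTree le) {x y : Set ℕ} (hx : IsBranch le x)
    (hy : IsBranch le y) {l₁ l₂ : ℕ} (h₁ : x ∩ y ⊆ Iic l₁) (h₂ : x ∩ y ⊆ Iic l₂) :
    IncompFinal le (finalSeg x l₁) (finalSeg y l₂) := by
  have hA : (finalSeg x l₁).Nonempty := (hT.branch_infinite hx).exists_gt l₁
  have hB : (finalSeg y l₂).Nonempty := (hT.branch_infinite hy).exists_gt l₂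
  have ha := Nat.sInf_mem hA
  have hb := Nat.sInf_mem hB
  refine ⟨hA, hB, fun hle ↦ ?_, fun hle ↦ ?_⟩
  · exact not_lt.2 (h₁ ⟨ha.1, hT.mem_of_le hy hb.1 hle⟩) ha.2
  · exact not_lt.2 (h₂ ⟨hT.mem_of_le hx ha.1 hle, hb.1⟩) hb.2

theorem exists_uniform_bound_inter (hT : IsJTTree le) {x β : Set ℕ} {τ : ℕ → Set ℕ}
    {D : Set ℕ} (hx : IsBranch le x) (hxβ : ¬ x ⊆ β) (hlim : TendstoPointwise τ β)
    (hD : ∀ n ∈ D, IsBranch le (τ n)) : ∃ N, ∀ n ∈ D, τ n ≠ x → x ∩ τ n ⊆ Iic N := by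
  obtain ⟨s, hs, hsβ⟩ := not_subset.1 hxβ
  obtain ⟨n₀, hn₀⟩ := eventually_atTop.1 (hlim s)
  have hfin : (Iio s ∪ ⋃ n ∈ {n ∈ D | n < n₀ ∧ τ n ≠ x}, x ∩ τ n).Finite :=
    (finite_Iio s).union <| ((finite_Iio n₀).subset fun n hn ↦ hn.2.1).biUnion
      fun n hn ↦ hT.branch_inter_finite hx (hD n hn.1) hn.2.2.symm
  obtain ⟨N, hN⟩ := hfin.bddAbove
  refine ⟨N, fun n hn hne ↦ Subset.trans ?_ (mem_upperBounds_iff_subset_Iic.1 hN)⟩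
  rcases lt_or_ge n n₀ with h | h
  · exact subset_union_of_subset_right
      (subset_biUnion_of_mem (u := fun n ↦ x ∩ τ n)
        (show n ∈ {n ∈ D | n < n₀ ∧ τ n ≠ x} from ⟨hn, h, hne⟩)) _
  · exact subset_union_of_subset_left
      (hT.inter_subset_Iio hx.1 (hD n hn) hs fun hsn ↦ hsβ ((hn₀ n h).1 hsn)) _

theorem eventually_uniform_bound_inter (hT : IsJTTree le) {β : Set ℕ} {τ : ℕ → Set ℕ}
    {D : Set ℕ} (hβ : IsChain le β) (hlim : TendstoPointwise τ β)
    (hD : ∀ n ∈ D, IsBranch le (τ n)) (hinj : D.InjOn τ) :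
    ∀ᶠ n in atTop, n ∈ D → ∃ N, ∀ n' ∈ D, n' ≠ n → τ n ∩ τ n' ⊆ Iic N := by
  have hexc : {n ∈ D | τ n ⊆ β}.Subsingleton := fun n hn n' hn' ↦
    hinj hn.1 hn'.1 (((hD n hn.1).2 β hβ hn.2).trans ((hD n' hn'.1).2 β hβ hn'.2).symm)
  filter_upwards [Nat.cofinite_eq_atTop ▸ hexc.finite.eventually_cofinite_notMem]
    with n hn hnD
  obtain ⟨N, hN⟩ :=
    hT.exists_uniform_bound_inter (hD n hnD) (fun h ↦ hn ⟨hnD, h⟩) hlim hD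
  exact ⟨N, fun n' hn' hne ↦ hN n' hn' (hinj.ne hn' hnD hne)⟩

theorem exists_subseq_incompFinal (hT : IsJTTree le) {κ : ℕ → ℕ} (hκ : StrictMono κ)
    {τ : ℕ → ℕ → Set ℕ} {β : ℕ → Set ℕ} (hbr : ∀ n, ∀ k < κ n, IsBranch le (τ n k))
    (hne : ∀ n n', n ≠ n' → ∀ k, k < κ n → k < κ n' → τ n k ≠ τ n' k)
    (hlim : ∀ k, TendstoPointwise (fun n ↦ τ n k) (β k)) :
    ∃ ψ : ℕ → ℕ, StrictMono ψ ∧ ∃ L : ℕ → ℕ, ∀ i j j', i < j → j < j' → ∀ k < κ (ψ i),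
      IncompFinal le (finalSeg (τ (ψ j) k) (L j)) (finalSeg (τ (ψ j') k) (L j')) := by
  have hunif : ∀ k, ∀ᶠ n in atTop, k < κ n →
      ∃ N, ∀ n', k < κ n' → n' ≠ n → τ n k ∩ τ n' k ⊆ Iic N := fun k ↦
    hT.eventually_uniform_bound_inter (D := {n | k < κ n})
      (IsChain.of_tendstoPointwise ((hκ.tendsto_atTop.eventually_gt_atTop k).mono
        fun n hn ↦ (hbr n k hn).1) (hlim k))
      (hlim k) (fun n hn ↦ hbr n k hn)
      fun n hn n' hn' h ↦ by_contra fun hnn' ↦ hne n n' hnn' k hn hn' h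
  obtain ⟨ψ, hψ, hψunif⟩ := exists_strictMono_forall_lt_of_eventually fun i ↦
    (finite_Iio (κ i)).eventually_all.2 fun k _ ↦ hunif k
  obtain ⟨L, hL⟩ := exists_uniform_bounds (fun i j k ↦ τ (ψ i) k ∩ τ (ψ j) k) (κ ∘ ψ)
    fun i j hij k hk ↦
      hT.branch_inter_finite (hbr _ k hk) (hbr _ k (hk.trans (hκ (hψ hij))))
        (hne _ _ (hψ hij).ne k hk (hk.trans (hκ (hψ hij))))
  refine ⟨ψ, hψ, L, fun i j j' hij hjj' k hk ↦ ?_⟩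
  have hkj : k < κ (ψ j) := hk.trans (hκ (hψ hij))
  obtain ⟨N, hN⟩ := hψunif i j hij k hk hkj
  obtain ⟨h₁, h₂⟩ := hL j j' hjj' k hkj
    ⟨N, fun j'' hj'' ↦ hN (ψ j'') (hkj.trans (hκ (hψ hj''))) (hψ hj'').ne'⟩
  exact hT.incompFinal_finalSeg (hbr _ k hkj) (hbr _ k (hkj.trans (hκ (hψ hjj')))) h₁ h₂

end IsJTTree

theorem stmt15_general (le : ℕ → ℕ → Prop) (hT : IsJTTree le)
    (κ : ℕ → ℕ) (hκ : StrictMono κ)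
    (σ : ℕ → ℕ → Set ℕ)
    (hbr : ∀ n, ∀ i < κ n, IsBranch le (σ n i))
    (hdisj : ∀ n m, n ≠ m → ∀ i < κ n, ∀ j < κ m, σ n i ≠ σ m j) :
    ∃ M : Set ℕ, M.Infinite ∧ ∃ l : ℕ → ℕ,
      ∀ m ∈ M, ∀ m₁ ∈ M, ∀ m₂ ∈ M, m < m₁ → m₁ < m₂ →
        ∀ k < κ m, IncompFinal le (finalSeg (σ m₁ k) (l m₁)) (finalSeg (σ m₂ k) (l m₂)) := by
  obtain ⟨φ, hφ, β, hlim⟩ := exists_subseq_tendstoPointwise σ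
  obtain ⟨ψ, hψ, L, hL⟩ :=
    hT.exists_subseq_incompFinal (hκ.comp hφ) (fun n ↦ hbr (φ n))
      (fun n n' h k hk hk' ↦ hdisj _ _ (hφ.injective.ne h) k hk k hk') hlim
  have hμ : StrictMono (φ ∘ ψ) := hφ.comp hψ
  refine ⟨range (φ ∘ ψ), infinite_range_of_injective hμ.injective,
    Function.extend (φ ∘ ψ) L 0, ?_⟩
  rintro _ ⟨i, rfl⟩ _ ⟨j, rfl⟩ _ ⟨j', rfl⟩ hij hjj' k hk
  simp only [hμ.injective.extend_apply]
  exact hL i j j' (hμ.lt_iff_lt.1 hij) (hμ.lt_iff_lt.1 hjj') k hk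

theorem stmt15 (le : ℕ → ℕ → Prop) (hT : IsJTTree le)
    (κ : ℕ → ℕ) (hκ : StrictMono κ)
    (σ : ℕ → ℕ → Set ℕ)
    (hbr : ∀ n, ∀ i < κ n, IsBranch le (σ n i))
    (hinj : ∀ n, ∀ i < κ n, ∀ j < κ n, i ≠ j → σ n i ≠ σ n j)
    (hdisj : ∀ n m, n ≠ m → ∀ i < κ n, ∀ j < κ m, σ n i ≠ σ m j) :
    ∃ M : Set ℕ, M.Infinite ∧ ∃ l : ℕ → ℕ,
      ∀ m ∈ M, ∀ m₁ ∈ M, ∀ m₂ ∈ M, m < m₁ → m₁ < m₂ →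
        ∀ k < κ m, IncompFinal le (finalSeg (σ m₁ k) (l m₁)) (finalSeg (σ m₂ k) (l m₂)) :=
  stmt15_general le hT κ hκ σ hbr hdisj
end

section
/- Let ⪯' be a second partial order on ℕ compatible with the usual order, possessing a ⪯'-least element, such that the set of strict ⪯'-predecessors of every element is finite and ⪯'-linearly ordered and every element has exactly two immediate ⪯'-successors (the dyadic tree 𝒟), and let JT^𝒟_{2,p} be the completion of c₀₀ under the norm defined exactly as the JT_{2,p} norm but using ⪯'-segments in place of ⪯-segments. Then JT_{2,p} and JT^𝒟_{2,p} are isomorphic: there exists a continuous linear equivalence between them. -/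
open Set Filter Topology

/-- The dyadic tree `𝒟`: a partial order on `ℕ` compatible with the usual order, with a least
element, in which the set of strict predecessors of every element is finite and linearly
ordered, and every element has exactly two immediate successors. -/
structure IsDyadicTree (le : ℕ → ℕ → Prop) : Prop where
  refl : ∀ n, le n n
  antisymm : ∀ {m n}, le m n → le n m → m = n
  trans : ∀ {a b c}, le a b → le b c → le a c
  compat : ∀ {m n}, le m n → m ≤ n
  pred_finite : ∀ n, {m | le m n ∧ m ≠ n}.Finite
  pred_linear : ∀ n a b, le a n → le b n → le a b ∨ le b a
  root : ∃ r, ∀ n, le r n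
  succ_two : ∀ n, ∃ a b, a ≠ b ∧ {k | ImmSucc le n k} = {a, b}

/-!
Both trees split into two pieces which, with the induced orders, are forests in which every node
has infinitely many children: `𝒯` into the subtree `S` above `0` with the subtrees above
infinitely many (but not all) children of `0` cut off, and its complement; `𝒟` into the root
with all `a`-children, and all `b`-children, where `a n` and `b n` are the two successors of `n`.
Two such forests whose sets of roots are equinumerous are order isomorphic (match the roots, then
recursively match the children of matched nodes, two countably infinite sets), so some
permutation `e` of `ℕ` is an order isomorphism on `S` and on `Sᶜ`.

On vectors supported in one piece, `x ↦ x ∘ e⁻¹` does not increase the `JT` norm: the preimage of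
a `⪯'`-segment meets the support in the trace of a `⪯`-segment, and disjoint segments give
disjoint segments. Splitting a vector along `S` and `Sᶜ`, and using that restricting a vector does
not increase its norm, gives `‖x ∘ e⁻¹‖ ≤ 2 ‖x‖` and symmetrically, so the isomorphism of `c₀₀`
induced by `e` extends to the completions.
-/

/-! ## Tree orders and induced forests -/

structure IsTreeOrder (le : ℕ → ℕ → Prop) : Prop where
  refl : ∀ n, le n n
  antisymm : ∀ {m n}, le m n → le n m → m = n
  trans : ∀ {a b c}, le a b → le b c → le a c
  compat : ∀ {m n}, le m n → m ≤ n
  pred_finite : ∀ n, {m | le m n ∧ m ≠ n}.Finite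
  pred_linear : ∀ n a b, le a n → le b n → le a b ∨ le b a

theorem IsJTTree.isTreeOrder {le : ℕ → ℕ → Prop} (hT : IsJTTree le) : IsTreeOrder le :=
  ⟨hT.refl, hT.antisymm, hT.trans, hT.compat, hT.pred_finite, hT.pred_linear⟩

theorem IsDyadicTree.isTreeOrder {le : ℕ → ℕ → Prop} (hD : IsDyadicTree le) : IsTreeOrder le :=
  ⟨hD.refl, hD.antisymm, hD.trans, hD.compat, hD.pred_finite, hD.pred_linear⟩

section InducedForest

variable (le : ℕ → ℕ → Prop) (P : Set ℕ)

def predsIn (k : ℕ) : Set ℕ := {m | m ∈ P ∧ le m k ∧ m ≠ k}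

/-- The nearest strict predecessor of `k` in `P` (the largest one, since `le` refines `≤`), and
`sSup ∅ = 0` if there is none. -/
noncomputable def parentIn (k : ℕ) : ℕ := sSup (predsIn le P k)

def rootsIn : Set ℕ := {k | k ∈ P ∧ ¬ (predsIn le P k).Nonempty}

variable {le P} in
theorem nonempty_predsIn {n : ℕ} (hn : n ∈ P) (hr : n ∉ rootsIn le P) :
    (predsIn le P n).Nonempty :=
  by_contra fun h => hr ⟨hn, h⟩

def childrenIn (n : ℕ) : Set ℕ :=
  {k | k ∈ P ∧ (predsIn le P k).Nonempty ∧ parentIn le P k = n}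

def IsInfinitelyBranching : Prop := ∀ n ∈ P, (childrenIn le P n).Infinite

end InducedForest

def IsOrderEmbeddingOn (le le' : ℕ → ℕ → Prop) (f : ℕ → ℕ) (S : Set ℕ) : Prop :=
  ∀ m ∈ S, ∀ n ∈ S, le m n ↔ le' (f m) (f n)

namespace IsTreeOrder

variable {le : ℕ → ℕ → Prop} (hb : IsTreeOrder le) {P : Set ℕ} {k m n : ℕ}
include hb

theorem bddAbove_predsIn : BddAbove (predsIn le P k) :=
  ((hb.pred_finite k).subset fun _ hm => ⟨hm.2.1, hm.2.2⟩).bddAbove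

theorem parentIn_mem_predsIn (h : (predsIn le P k).Nonempty) : parentIn le P k ∈ predsIn le P k :=
  Nat.sSup_mem h hb.bddAbove_predsIn

theorem le_parentIn (hm : m ∈ predsIn le P k) : le m (parentIn le P k) := by
  have hpa := hb.parentIn_mem_predsIn ⟨m, hm⟩
  rcases hb.pred_linear k m _ hm.2.1 hpa.2.1 with h | h
  · exact h
  · have : parentIn le P k = m :=
      le_antisymm (hb.compat h) (le_csSup hb.bddAbove_predsIn hm)
    exact this ▸ hb.refl _

theorem parentIn_lt (h : (predsIn le P k).Nonempty) : parentIn le P k < k :=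
  have hpa := hb.parentIn_mem_predsIn h
  lt_of_le_of_ne (hb.compat hpa.2.1) hpa.2.2

theorem le_iff_parentIn (h : (predsIn le P k).Nonempty) (hm : m ∈ P) :
    le m k ↔ m = k ∨ le m (parentIn le P k) := by
  refine ⟨fun hmk => ?_, ?_⟩
  · by_cases hne : m = k
    · exact Or.inl hne
    · exact Or.inr (hb.le_parentIn ⟨hm, hmk, hne⟩)
  · rintro (rfl | hmp)
    · exact hb.refl m
    · exact hb.trans hmp (hb.parentIn_mem_predsIn h).2.1

theorem le_root_iff (hr : k ∈ rootsIn le P) (hm : m ∈ P) : le m k ↔ m = k := by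
  refine ⟨fun hmk => ?_, fun h => h ▸ hb.refl m⟩
  by_contra hne
  exact hr.2 ⟨m, hm, hmk, hne⟩

theorem mem_childrenIn (hk : k ∈ P) (hn : n ∈ predsIn le P k)
    (hmax : ∀ m ∈ predsIn le P k, le m n) : k ∈ childrenIn le P n :=
  ⟨hk, ⟨n, hn⟩, hb.antisymm (hmax _ (hb.parentIn_mem_predsIn ⟨n, hn⟩)) (hb.le_parentIn hn)⟩

theorem le_of_immSucc (h : ImmSucc le n k) (hmk : le m k) (hne : m ≠ k) : le m n := by
  rcases hb.pred_linear k m n hmk h.1 with hmn | hnm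
  · exact hmn
  · rcases h.2.2 m hnm hmk with rfl | rfl
    · exact hb.refl m
    · exact absurd rfl hne

theorem lt_of_immSucc (h : ImmSucc le n k) : n < k :=
  lt_of_le_of_ne (hb.compat h.1) h.2.1

theorem eq_of_immSucc (h : ImmSucc le n k) (h' : ImmSucc le m k) : n = m :=
  hb.antisymm (hb.le_of_immSucc h' h.1 h.2.1) (hb.le_of_immSucc h h'.1 h'.2.1)

theorem immSucc_mem_childrenIn (h : ImmSucc le n k) (hn : n ∈ P) (hk : k ∈ P) :
    k ∈ childrenIn le P n :=
  hb.mem_childrenIn hk ⟨hn, h.1, h.2.1⟩ fun _ hm => hb.le_of_immSucc h hm.2.1 hm.2.2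

theorem le_min'_and_max'_le {C : Finset ℕ} (hC : C.Nonempty)
    (hchain : ∀ i ∈ C, ∀ j ∈ C, le i j ∨ le j i) :
    ∀ i ∈ C, le (C.min' hC) i ∧ le i (C.max' hC) := by
  intro i hi
  constructor
  · rcases hchain _ (C.min'_mem hC) i hi with h | h
    · exact h
    · exact le_antisymm (C.min'_le i hi) (hb.compat h) ▸ hb.refl _
  · rcases hchain i hi _ (C.max'_mem hC) with h | h
    · exact h
    · exact le_antisymm (hb.compat h) (C.le_max' i hi) ▸ hb.refl _

end IsTreeOrder

/-! ## Forests with infinite branching -/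

theorem Set.Infinite.exists_bijOn {α : Type*} [Countable α] {s t : Set α} (hs : s.Infinite)
    (ht : t.Infinite) : ∃ f : α → α, BijOn f s t := by
  classical
  have := hs.to_subtype
  have := ht.to_subtype
  obtain ⟨E⟩ : Nonempty (s ≃ t) := nonempty_equiv_of_countable
  refine ⟨fun x => if h : x ∈ s then E ⟨x, h⟩ else x, fun x hx => by simp [hx], ?_, ?_⟩
  · intro x hx y hy hxy
    simp only [hx, hy, dite_true] at hxy
    simpa using E.injective (Subtype.ext hxy)
  · intro y hy
    exact ⟨E.symm ⟨y, hy⟩, (E.symm ⟨y, hy⟩).2, by simp⟩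

section ForestIso

variable {le le' : ℕ → ℕ → Prop} {P P' : Set ℕ}

open Classical in
/-- The test `parentIn le P n < n` holds for every non-root `n ∈ P`; it only serves termination. -/
noncomputable def forestMap (le : ℕ → ℕ → Prop) (P : Set ℕ) (e : ℕ → ℕ)
    (φ : ℕ → ℕ → ℕ → ℕ) (n : ℕ) : ℕ :=
  if n ∉ rootsIn le P ∧ parentIn le P n < n then
    φ (parentIn le P n) (forestMap le P e φ (parentIn le P n)) n
  else e n
termination_by n
decreasing_by exact (by assumption : _ ∧ _).2

variable {e : ℕ → ℕ} {φ : ℕ → ℕ → ℕ → ℕ} {n : ℕ}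

theorem forestMap_of_mem_rootsIn (hn : n ∈ rootsIn le P) : forestMap le P e φ n = e n := by
  rw [forestMap, if_neg (fun h => h.1 hn)]

variable (hb : IsTreeOrder le) (hb' : IsTreeOrder le')
  (he : BijOn e (rootsIn le P) (rootsIn le' P'))
  (hφ : ∀ a ∈ P, ∀ b ∈ P', BijOn (φ a b) (childrenIn le P a) (childrenIn le' P' b))
include hb

theorem forestMap_of_not_mem_rootsIn (hn : n ∈ P) (hn' : n ∉ rootsIn le P) :
    forestMap le P e φ n = φ (parentIn le P n) (forestMap le P e φ (parentIn le P n)) n := by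
  rw [forestMap, if_pos ⟨hn', hb.parentIn_lt (nonempty_predsIn hn hn')⟩]

include he hφ

theorem forestMap_mem_rootsIn_or_childrenIn : ∀ n ∈ P,
    (n ∈ rootsIn le P → forestMap le P e φ n ∈ rootsIn le' P') ∧
    (n ∉ rootsIn le P →
      forestMap le P e φ n ∈ childrenIn le' P' (forestMap le P e φ (parentIn le P n))) := by
  intro n
  induction n using Nat.strong_induction_on with
  | _ n ih =>
  intro hn
  refine ⟨fun hr => ?_, fun hr => ?_⟩
  · rw [forestMap_of_mem_rootsIn hr]
    exact he.mapsTo hr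
  · have hne := nonempty_predsIn hn hr
    have hq := (hb.parentIn_mem_predsIn hne).1
    have hgq := ih _ (hb.parentIn_lt hne) hq
    have hgqP' : forestMap le P e φ (parentIn le P n) ∈ P' := by
      by_cases hqr : parentIn le P n ∈ rootsIn le P
      · exact (hgq.1 hqr).1
      · exact (hgq.2 hqr).1
    rw [forestMap_of_not_mem_rootsIn hb hn hr]
    exact (hφ _ hq _ hgqP').mapsTo ⟨hn, hne, rfl⟩

theorem forestMap_mem (hn : n ∈ P) : forestMap le P e φ n ∈ P' := by
  by_cases hr : n ∈ rootsIn le P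
  · exact ((forestMap_mem_rootsIn_or_childrenIn hb he hφ n hn).1 hr).1
  · exact ((forestMap_mem_rootsIn_or_childrenIn hb he hφ n hn).2 hr).1

theorem forestMap_mem_rootsIn_iff (hn : n ∈ P) :
    forestMap le P e φ n ∈ rootsIn le' P' ↔ n ∈ rootsIn le P := by
  refine ⟨fun h => by_contra fun hr => ?_, (forestMap_mem_rootsIn_or_childrenIn hb he hφ n hn).1⟩
  exact h.2 ((forestMap_mem_rootsIn_or_childrenIn hb he hφ n hn).2 hr).2.1

theorem parentIn_forestMap (hn : n ∈ P) (hr : n ∉ rootsIn le P) :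
    parentIn le' P' (forestMap le P e φ n) = forestMap le P e φ (parentIn le P n) :=
  ((forestMap_mem_rootsIn_or_childrenIn hb he hφ n hn).2 hr).2.2

theorem forestMap_injOn : InjOn (forestMap le P e φ) P := by
  intro m hm n hn
  induction n using Nat.strong_induction_on generalizing m with
  | _ n ih =>
  intro hmn
  have hroot := (forestMap_mem_rootsIn_iff hb he hφ hm).symm.trans
    (hmn ▸ forestMap_mem_rootsIn_iff hb he hφ hn)
  by_cases hr : n ∈ rootsIn le P
  · rw [forestMap_of_mem_rootsIn (hroot.2 hr), forestMap_of_mem_rootsIn hr] at hmn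
    exact he.injOn (hroot.2 hr) hr hmn
  · have hmr : m ∉ rootsIn le P := fun h => hr (hroot.1 h)
    have hq : parentIn le P m = parentIn le P n := by
      refine ih _ (hb.parentIn_lt (nonempty_predsIn hn hr))
        (hb.parentIn_mem_predsIn (nonempty_predsIn hm hmr)).1
        (hb.parentIn_mem_predsIn (nonempty_predsIn hn hr)).1 ?_
      rw [← parentIn_forestMap hb he hφ hm hmr, ← parentIn_forestMap hb he hφ hn hr, hmn]
    rw [forestMap_of_not_mem_rootsIn hb hm hmr, forestMap_of_not_mem_rootsIn hb hn hr, hq] at hmn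
    have hqP := (hb.parentIn_mem_predsIn (nonempty_predsIn hn hr)).1
    exact (hφ _ hqP _ (forestMap_mem hb he hφ hqP)).injOn
      ⟨hm, nonempty_predsIn hm hmr, hq⟩ ⟨hn, nonempty_predsIn hn hr, rfl⟩ hmn

include hb'

theorem forestMap_surjOn : SurjOn (forestMap le P e φ) P P' := by
  intro k hk
  induction k using Nat.strong_induction_on with
  | _ k ih =>
  by_cases hr : k ∈ rootsIn le' P'
  · obtain ⟨n, hn, rfl⟩ := he.surjOn hr
    exact ⟨n, hn.1, forestMap_of_mem_rootsIn hn⟩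
  · have hne := nonempty_predsIn hk hr
    have hq := (hb'.parentIn_mem_predsIn hne).1
    obtain ⟨a, ha, hga⟩ := ih _ (hb'.parentIn_lt hne) hq
    obtain ⟨n, ⟨hn, hnne, rfl⟩, rfl⟩ :=
      (hφ a ha _ (forestMap_mem hb he hφ ha)).surjOn ⟨hk, hne, hga.symm⟩
    exact ⟨n, hn, forestMap_of_not_mem_rootsIn hb hn fun h => h.2 hnne⟩

theorem isOrderEmbeddingOn_forestMap : IsOrderEmbeddingOn le le' (forestMap le P e φ) P := by
  intro m hm n hn
  induction n using Nat.strong_induction_on generalizing m with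
  | _ n ih =>
  have hinj := forestMap_injOn hb he hφ
  by_cases hr : n ∈ rootsIn le P
  · rw [hb.le_root_iff hr hm, hb'.le_root_iff ((forestMap_mem_rootsIn_iff hb he hφ hn).2 hr)
      (forestMap_mem hb he hφ hm)]
    exact ⟨congrArg _, fun h => hinj hm hn h⟩
  · have hne := nonempty_predsIn hn hr
    have hq := (hb.parentIn_mem_predsIn hne).1
    have hgr : forestMap le P e φ n ∉ rootsIn le' P' :=
      fun h => hr ((forestMap_mem_rootsIn_iff hb he hφ hn).1 h)
    rw [hb.le_iff_parentIn hne hm,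
      hb'.le_iff_parentIn (nonempty_predsIn (forestMap_mem hb he hφ hn) hgr)
        (forestMap_mem hb he hφ hm),
      parentIn_forestMap hb he hφ hn hr, ih _ (hb.parentIn_lt hne) m hm hq]
    exact or_congr_left ⟨congrArg _, fun h => hinj hm hn h⟩

omit he hφ in
theorem exists_bijOn_isOrderEmbeddingOn
    (hP : IsInfinitelyBranching le P) (hP' : IsInfinitelyBranching le' P')
    (he : BijOn e (rootsIn le P) (rootsIn le' P')) :
    ∃ g : ℕ → ℕ, BijOn g P P' ∧ IsOrderEmbeddingOn le le' g P := by
  have hfib : ∀ a b, ∃ f : ℕ → ℕ, a ∈ P → b ∈ P' →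
      BijOn f (childrenIn le P a) (childrenIn le' P' b) := by
    intro a b
    by_cases h : a ∈ P ∧ b ∈ P'
    · obtain ⟨f, hf⟩ := (hP a h.1).exists_bijOn (hP' b h.2)
      exact ⟨f, fun _ _ => hf⟩
    · exact ⟨id, fun ha hb => absurd ⟨ha, hb⟩ h⟩
  choose φ hφ using hfib
  replace hφ : ∀ a ∈ P, ∀ b ∈ P', _ := fun a ha b hb => hφ a b ha hb
  refine ⟨forestMap le P e φ, ⟨fun n hn => forestMap_mem hb he hφ hn, forestMap_injOn hb he hφ,
    forestMap_surjOn hb hb' he hφ⟩, isOrderEmbeddingOn_forestMap hb hb' he hφ⟩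

end ForestIso

theorem exists_perm_isOrderEmbeddingOn {le le' : ℕ → ℕ → Prop} (hb : IsTreeOrder le)
    (hb' : IsTreeOrder le') {S T : Set ℕ}
    (hS : IsInfinitelyBranching le S) (hSc : IsInfinitelyBranching le Sᶜ)
    (hT : IsInfinitelyBranching le' T) (hTc : IsInfinitelyBranching le' Tᶜ)
    {e₁ e₂ : ℕ → ℕ} (he₁ : BijOn e₁ (rootsIn le S) (rootsIn le' T))
    (he₂ : BijOn e₂ (rootsIn le Sᶜ) (rootsIn le' Tᶜ)) :
    ∃ e : ℕ ≃ ℕ, IsOrderEmbeddingOn le le' e S ∧ IsOrderEmbeddingOn le le' e Sᶜ := by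
  classical
  obtain ⟨g₁, hg₁, hg₁o⟩ := exists_bijOn_isOrderEmbeddingOn hb hb' hS hT he₁
  obtain ⟨g₂, hg₂, hg₂o⟩ := exists_bijOn_isOrderEmbeddingOn hb hb' hSc hTc he₂
  refine ⟨Equiv.subtypeCongr (hg₁.equiv g₁) (hg₂.equiv g₂), fun m hm n hn => ?_,
    fun m hm n hn => ?_⟩
  · simp only [Equiv.subtypeCongr, Equiv.trans_apply, Equiv.sumCompl_symm_apply_of_pos hm,
      Equiv.sumCompl_symm_apply_of_pos hn]
    exact hg₁o m hm n hn
  · rw [Set.mem_compl_iff] at hm hn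
    simp only [Equiv.subtypeCongr, Equiv.trans_apply, Equiv.sumCompl_symm_apply_of_neg hm,
      Equiv.sumCompl_symm_apply_of_neg hn]
    exact hg₂o m hm n hn

/-! ## Splitting `𝒯` and `𝒟` -/

theorem Set.Infinite.exists_infinite_diff {α : Type*} [Countable α] {s : Set α}
    (hs : s.Infinite) : ∃ t ⊆ s, t.Infinite ∧ (s \ t).Infinite := by
  have := hs.to_subtype
  obtain ⟨E⟩ : Nonempty (ℕ ⊕ ℕ ≃ s) := nonempty_equiv_of_countable
  have hinj : Function.Injective fun n => (E n : α) := Subtype.val_injective.comp E.injective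
  refine ⟨range fun n => (E (.inl n) : α), ?_, ?_, ?_⟩
  · rintro _ ⟨n, rfl⟩
    exact (E _).2
  · exact infinite_range_of_injective (hinj.comp Sum.inl_injective)
  · refine (infinite_range_of_injective (hinj.comp Sum.inr_injective)).mono ?_
    rintro _ ⟨n, rfl⟩
    exact ⟨(E _).2, fun ⟨m, hm⟩ => Sum.inl_ne_inr (hinj hm)⟩

theorem IsJTTree.exists_split {le : ℕ → ℕ → Prop} (hT : IsJTTree le) :
    ∃ S : Set ℕ, rootsIn le S = {0} ∧ (rootsIn le Sᶜ).Infinite ∧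
      IsInfinitelyBranching le S ∧ IsInfinitelyBranching le Sᶜ := by
  have hb := hT.isTreeOrder
  obtain ⟨K, hK, hKinf, hKc⟩ := (hT.succ_infinite 0).exists_infinite_diff
  have hK0 : ∀ k ∈ K, ImmSucc le 0 k := hK
  -- The children in `K` of `0` become infinitely many roots of `Sᶜ`.
  set S : Set ℕ := {n | le 0 n ∧ ∀ k ∈ K, ¬ le k n}
  have h0 : 0 ∈ S := ⟨hb.refl 0, fun k hk h => (hK0 k hk).2.1 (Nat.le_zero.1 (hb.compat h)).symm⟩
  have hchild : ∀ {n k}, ImmSucc le n k → (k ∈ S ↔ n ∈ S ∧ k ∉ K) := by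
    intro n k hnk
    constructor
    · intro hk
      refine ⟨?_, fun hkK => hk.2 k hkK (hb.refl k)⟩
      rcases hb.pred_linear k 0 n hk.1 hnk.1 with h | h
      · exact ⟨h, fun k' hk' h' => hk.2 k' hk' (hb.trans h' hnk.1)⟩
      · exact Nat.le_zero.1 (hb.compat h) ▸ h0
    · rintro ⟨hn, hkK⟩
      refine ⟨hb.trans hn.1 hnk.1, fun k' hk' h' => ?_⟩
      exact hn.2 k' hk' (hb.le_of_immSucc hnk h' fun h => hkK (h ▸ hk'))
  refine ⟨S, ?_, ?_, ?_, ?_⟩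
  · ext n
    refine ⟨fun hn => by_contra fun hne => hn.2 ⟨0, h0, hn.1.1, Ne.symm hne⟩, ?_⟩
    rintro rfl
    exact ⟨h0, fun ⟨m, _, hm, hne⟩ => hne (Nat.le_zero.1 (hb.compat hm))⟩
  · refine hKinf.mono fun k hk => ⟨fun h => h.2 k hk (hb.refl k), fun ⟨m, hm, hmk, hne⟩ => hm ?_⟩
    exact Nat.le_zero.1 (hb.compat (hb.le_of_immSucc (hK0 k hk) hmk hne)) ▸ h0
  · intro n hn
    have hsucc : ({k | ImmSucc le n k} \ K).Infinite := by
      rcases eq_or_ne n 0 with rfl | hn0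
      · exact hKc
      · exact (hT.succ_infinite n).mono fun k hk =>
          ⟨hk, fun hkK => hn0 (hb.eq_of_immSucc hk (hK0 k hkK))⟩
    refine hsucc.mono fun k hk => ?_
    exact hb.immSucc_mem_childrenIn hk.1 hn ((hchild hk.1).2 ⟨hn, hk.2⟩)
  · intro n hn
    exact (hT.succ_infinite n).mono fun k hk =>
      hb.immSucc_mem_childrenIn hk hn fun hkS => hn ((hchild hk).1 hkS).1

namespace IsTreeOrder

variable {le : ℕ → ℕ → Prop} (hb : IsTreeOrder le) {P : Set ℕ} {φ ψ : ℕ → ℕ} {m n : ℕ}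
include hb

theorem le_iterate (hφ : ∀ m, ImmSucc le m (φ m)) (n j : ℕ) : le n (φ^[j] n) := by
  induction j with
  | zero => exact hb.refl n
  | succ j ih =>
    rw [Function.iterate_succ_apply']
    exact hb.trans ih (hφ _).1

theorem le_of_le_iterate (hφ : ∀ m, ImmSucc le m (φ m)) (hφP : ∀ m, φ m ∉ P) (hm : m ∈ P)
    (j : ℕ) (h : le m (φ^[j] n)) : le m n := by
  induction j with
  | zero => exact h
  | succ j ih =>
    rw [Function.iterate_succ_apply'] at h
    exact ih (hb.le_of_immSucc (hφ _) h fun he => hφP _ (he ▸ hm))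

theorem injective_comp_iterate (hφ : ∀ m, ImmSucc le m (φ m)) (hψ : ∀ m, ImmSucc le m (ψ m))
    (n : ℕ) : Function.Injective fun j => ψ (φ^[j] n) := by
  have hmono : StrictMono fun j => φ^[j] n := strictMono_nat_of_lt_succ fun j => by
    rw [Function.iterate_succ_apply']
    exact hb.lt_of_immSucc (hφ _)
  intro i j (hij : ψ (φ^[i] n) = ψ (φ^[j] n))
  exact hmono.injective (hb.eq_of_immSucc (hψ _) (hij ▸ hψ _))

/-- The children are the nodes `ψ (φ^[j] n)`. -/
theorem infinite_childrenIn (hφ : ∀ m, ImmSucc le m (φ m)) (hφP : ∀ m, φ m ∉ P)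
    (hψ : ∀ m, ImmSucc le m (ψ m)) (hψP : ∀ m, ψ m ∈ P) (hn : n ∈ P) :
    (childrenIn le P n).Infinite := by
  refine Set.infinite_of_injective_forall_mem (hb.injective_comp_iterate hφ hψ n) fun j => ?_
  have hlt : n < ψ (φ^[j] n) :=
    (hb.compat (hb.le_iterate hφ n j)).trans_lt (hb.lt_of_immSucc (hψ _))
  refine hb.mem_childrenIn (hψP _) ⟨hn, hb.trans (hb.le_iterate hφ n j) (hψ _).1, hlt.ne⟩
    fun m hm => ?_
  exact hb.le_of_le_iterate hφ hφP hm.1 j (hb.le_of_immSucc (hψ _) hm.2.1 hm.2.2)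

end IsTreeOrder

theorem IsDyadicTree.exists_split {le : ℕ → ℕ → Prop} (hD : IsDyadicTree le) :
    ∃ (r : ℕ) (T : Set ℕ), rootsIn le T = {r} ∧ (rootsIn le Tᶜ).Infinite ∧
      IsInfinitelyBranching le T ∧ IsInfinitelyBranching le Tᶜ := by
  have ht := hD.isTreeOrder
  obtain ⟨r, hr⟩ := hD.root
  choose a b hab hsucc using hD.succ_two
  have ha : ∀ n, ImmSucc le n (a n) := fun n => by
    change a n ∈ {k | ImmSucc le n k}
    rw [hsucc n]
    exact Or.inl rfl
  have hb : ∀ n, ImmSucc le n (b n) := fun n => by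
    change b n ∈ {k | ImmSucc le n k}
    rw [hsucc n]
    exact Or.inr rfl
  have haP : ∀ n, a n ∉ range b := by
    rintro n ⟨m, hm⟩
    obtain rfl := ht.eq_of_immSucc (hb m) (hm ▸ ha n)
    exact hab m hm.symm
  have hrP : r ∉ range b := fun ⟨m, hm⟩ => (hb m).2.1 (ht.antisymm (hb m).1 (hm ▸ hr m))
  -- `T` is the root together with the `a`-children. The children of `n` are the `a (b^[j] n)` in
  -- `T` and the `b (a^[j] n)` in `Tᶜ = range b`, whose roots are the `b (a^[j] r)`.
  refine ⟨r, (range b)ᶜ, ?_, ?_, ?_, ?_⟩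
  · ext n
    refine ⟨fun hn => by_contra fun hne => hn.2 ⟨r, hrP, hr n, Ne.symm hne⟩, ?_⟩
    rintro rfl
    exact ⟨hrP, fun ⟨m, _, hm, hne⟩ => hne (ht.antisymm hm (hr m))⟩
  · rw [compl_compl]
    refine Set.infinite_of_injective_forall_mem (ht.injective_comp_iterate ha hb r) fun j =>
      ⟨⟨_, rfl⟩, fun ⟨m, hm, hmk, hne⟩ => hrP ?_⟩
    have hmr := ht.le_of_le_iterate ha haP hm j (ht.le_of_immSucc (hb _) hmk hne)
    exact ht.antisymm hmr (hr m) ▸ hm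
  · exact fun n hn => ht.infinite_childrenIn hb (fun m hm => hm ⟨m, rfl⟩) ha haP hn
  · rw [compl_compl]
    exact fun n hn => ht.infinite_childrenIn ha haP hb (fun m => ⟨m, rfl⟩) hn

theorem exists_perm_isOrderEmbeddingOn_and_compl {le le' : ℕ → ℕ → Prop} (hT : IsJTTree le)
    (hD : IsDyadicTree le') :
    ∃ (e : ℕ ≃ ℕ) (S : Set ℕ),
      IsOrderEmbeddingOn le le' e S ∧ IsOrderEmbeddingOn le le' e Sᶜ := by
  obtain ⟨S, hSroot, hScroots, hS, hSc⟩ := hT.exists_split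
  obtain ⟨r, T, hTroot, hTcroots, hT', hTc⟩ := hD.exists_split
  have hR : BijOn (fun _ => r) (rootsIn le S) (rootsIn le' T) := by
    rw [hSroot, hTroot]
    exact bijOn_singleton.2 rfl
  obtain ⟨e₂, he₂⟩ := hScroots.exists_bijOn hTcroots
  obtain ⟨e, he⟩ :=
    exists_perm_isOrderEmbeddingOn hT.isTreeOrder hD.isTreeOrder hS hSc hT' hTc hR he₂
  exact ⟨e, S, he⟩

/-! ## The `JT` norm -/

section JTNorm

open Function

variable {le : ℕ → ℕ → Prop} {p : ℝ} {x : ℕ → ℝ}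

/-- The set whose supremum is, by definition, `jtNorm le p x`. -/
def jtValues (le : ℕ → ℕ → Prop) (p : ℝ) (x : ℕ → ℝ) : Set ℝ :=
  { r : ℝ | ∃ (n : ℕ) (s : Fin n → Set ℕ),
    (∀ k, IsSegment le (s k)) ∧
    (∀ k l, k ≠ l → Disjoint (s k) (s l)) ∧
    r = (∑ k : Fin n, segNorm x (s k) ^ p) ^ (1 / p) }

theorem jtValues_nonempty : (jtValues le p x).Nonempty :=
  ⟨_, 0, fun k => k.elim0, fun k => k.elim0, fun k => k.elim0, rfl⟩

theorem segNorm_nonneg (x : ℕ → ℝ) (s : Set ℕ) : 0 ≤ segNorm x s := Real.sqrt_nonneg _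

theorem summable_indicator_sq (hx : x.HasFiniteSupport) (s : Set ℕ) :
    Summable (s.indicator fun j => x j ^ 2) :=
  summable_of_hasFiniteSupport <| hx.subset fun i hi => by simp_all

theorem segNorm_comp_symm (e : ℕ ≃ ℕ) (x : ℕ → ℝ) (s : Set ℕ) :
    segNorm (x ∘ e.symm) s = segNorm x (e ⁻¹' s) := by
  classical
  rw [segNorm, segNorm, ← e.tsum_eq]
  congr 2 with i
  simp only [Set.indicator_apply, Set.mem_preimage, comp_apply, Equiv.symm_apply_apply]

theorem segNorm_congr {s t : Set ℕ} (h : s ∩ support x = t ∩ support x) :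
    segNorm x s = segNorm x t := by
  classical
  rw [segNorm, segNorm]
  congr 2 with i
  by_cases hi : x i = 0
  · simp [Set.indicator_apply, hi]
  · have hst : i ∈ s ↔ i ∈ t := by simpa [hi] using Set.ext_iff.1 h i
    simp only [Set.indicator_apply, hst]

theorem segNorm_empty (x : ℕ → ℝ) : segNorm x ∅ = 0 := by
  simp [segNorm]

theorem segNorm_le_segNorm_of_abs_le {y : ℕ → ℝ} (hx : x.HasFiniteSupport)
    (hy : y.HasFiniteSupport) (hyx : ∀ i, |y i| ≤ |x i|) (s : Set ℕ) :
    segNorm y s ≤ segNorm x s := by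
  refine Real.sqrt_le_sqrt ((summable_indicator_sq hy s).tsum_le_tsum (fun i => ?_)
    (summable_indicator_sq hx s))
  exact Set.indicator_le_indicator (sq_le_sq.2 (hyx i))

theorem segNorm_le_sqrt_tsum (hx : x.HasFiniteSupport) (s : Set ℕ) :
    segNorm x s ≤ √(∑' i, x i ^ 2) :=
  Real.sqrt_le_sqrt ((summable_indicator_sq hx s).tsum_le_tsum
    (Set.indicator_le_self' fun _ _ => sq_nonneg _) (by simpa using summable_indicator_sq hx univ))

theorem sum_segNorm_sq_le {ι : Type*} [Fintype ι] (hx : x.HasFiniteSupport) (s : ι → Set ℕ)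
    (hdisj : Pairwise (Disjoint on s)) : ∑ k, segNorm x (s k) ^ 2 ≤ ∑' i, x i ^ 2 := by
  have hsq : ∀ k, segNorm x (s k) ^ 2 = ∑' i, (s k).indicator (fun j => x j ^ 2) i := fun k =>
    Real.sq_sqrt (tsum_nonneg fun _ => Set.indicator_nonneg (fun _ _ => sq_nonneg _) _)
  simp_rw [hsq]
  rw [← Summable.tsum_finsetSum fun k _ => summable_indicator_sq hx (s k)]
  refine Summable.tsum_le_tsum (fun i => ?_)
    (summable_of_hasFiniteSupport (hx.subset fun i hi => ?_))
    (by simpa using summable_indicator_sq hx univ)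
  · rw [← Finset.indicator_biUnion_apply _ _ fun k _ l _ hkl => hdisj hkl]
    exact Set.indicator_le_self' (fun _ _ => sq_nonneg _) i
  · classical
    contrapose! hi
    simp_all [Set.indicator_apply]

theorem bddAbove_jtValues (hp : 2 ≤ p) (hx : x.HasFiniteSupport) :
    BddAbove (jtValues le p x) := by
  set M := √(∑' i, x i ^ 2)
  have hM : M ^ 2 = ∑' i, x i ^ 2 := Real.sq_sqrt (tsum_nonneg fun _ => sq_nonneg _)
  refine ⟨(M ^ 2 * M ^ (p - 2)) ^ (1 / p), ?_⟩
  rintro _ ⟨n, s, -, hdisj, rfl⟩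
  refine Real.rpow_le_rpow (Finset.sum_nonneg fun k _ => ?_) ?_ (by positivity)
  · exact Real.rpow_nonneg (segNorm_nonneg x _) p
  calc ∑ k, segNorm x (s k) ^ p
      = ∑ k, segNorm x (s k) ^ 2 * segNorm x (s k) ^ (p - 2) := by
        refine Finset.sum_congr rfl fun k _ => ?_
        rw [← Real.rpow_natCast, ← Real.rpow_add' (segNorm_nonneg x _) (by norm_num; linarith)]
        norm_num
    _ ≤ ∑ k, segNorm x (s k) ^ 2 * M ^ (p - 2) := by
        refine Finset.sum_le_sum fun k _ => mul_le_mul_of_nonneg_left ?_ (sq_nonneg _)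
        exact Real.rpow_le_rpow (segNorm_nonneg x _) (segNorm_le_sqrt_tsum hx _) (by linarith)
    _ ≤ M ^ 2 * M ^ (p - 2) := by
        rw [← Finset.sum_mul, hM]
        exact mul_le_mul_of_nonneg_right (sum_segNorm_sq_le hx s hdisj) (by positivity)

theorem le_jtNorm {ι : Type*} [Fintype ι] (hbdd : BddAbove (jtValues le p x)) (s : ι → Set ℕ)
    (hs : ∀ k, IsSegment le (s k)) (hdisj : Pairwise (Disjoint on s)) :
    (∑ k, segNorm x (s k) ^ p) ^ (1 / p) ≤ jtNorm le p x := by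
  refine le_csSup hbdd ⟨_, s ∘ (Fintype.equivFin ι).symm, fun k => hs _,
    fun k l hkl => hdisj ((Fintype.equivFin ι).symm.injective.ne hkl), ?_⟩
  rw [← (Fintype.equivFin ι).symm.sum_comp]
  rfl

theorem jtNorm_le_of_abs_le {y : ℕ → ℝ} (hp : 2 ≤ p) (hx : x.HasFiniteSupport)
    (hy : y.HasFiniteSupport) (hyx : ∀ i, |y i| ≤ |x i|) : jtNorm le p y ≤ jtNorm le p x := by
  refine csSup_le jtValues_nonempty ?_
  rintro _ ⟨n, s, hs, hdisj, rfl⟩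
  refine le_trans ?_ (le_jtNorm (bddAbove_jtValues hp hx) s hs hdisj)
  refine Real.rpow_le_rpow (Finset.sum_nonneg fun k _ => Real.rpow_nonneg (segNorm_nonneg y _) p)
    (Finset.sum_le_sum fun k _ => ?_) (by positivity)
  exact Real.rpow_le_rpow (segNorm_nonneg y _) (segNorm_le_segNorm_of_abs_le hx hy hyx _)
    (by linarith)

end JTNorm

section Transport

open Function

variable {le le' : ℕ → ℕ → Prop} {p : ℝ} {x : ℕ → ℝ}

theorem IsOrderEmbeddingOn.exists_segment_trace {e : ℕ → ℕ} {S : Set ℕ}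
    (he : IsOrderEmbeddingOn le le' e S) (hb : IsTreeOrder le) (hb' : IsTreeOrder le')
    {A : Finset ℕ} (hA : ↑A ⊆ S) {t : Set ℕ} (ht : IsSegment le' t) (hne : ∃ i ∈ A, e i ∈ t) :
    ∃ a b, a ∈ A ∧ e a ∈ t ∧ le a b ∧ ∀ i ∈ A, (le a i ∧ le i b ↔ e i ∈ t) := by
  classical
  obtain ⟨u, v, -, rfl⟩ := ht
  set C := A.filter fun i => le' u (e i) ∧ le' (e i) v
  have hC : C.Nonempty := by
    obtain ⟨i, hi, hit⟩ := hne
    exact ⟨i, Finset.mem_filter.2 ⟨hi, hit⟩⟩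
  have hchain : ∀ i ∈ C, ∀ j ∈ C, le i j ∨ le j i := by
    intro i hi j hj
    simp only [C, Finset.mem_filter] at hi hj
    rcases hb'.pred_linear v _ _ hi.2.2 hj.2.2 with h | h
    · exact Or.inl ((he i (hA hi.1) j (hA hj.1)).2 h)
    · exact Or.inr ((he j (hA hj.1) i (hA hi.1)).2 h)
  have hbounds := hb.le_min'_and_max'_le hC hchain
  have hminC := Finset.mem_filter.1 (C.min'_mem hC)
  have hmaxC := Finset.mem_filter.1 (C.max'_mem hC)
  refine ⟨C.min' hC, C.max' hC, hminC.1, hminC.2, (hbounds _ (C.min'_mem hC)).2,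
    fun i hi => ⟨fun ⟨h1, h2⟩ => ?_, fun hit => hbounds i (Finset.mem_filter.2 ⟨hi, hit⟩)⟩⟩
  exact ⟨hb'.trans hminC.2.1 ((he _ (hA hminC.1) i (hA hi)).1 h1),
    hb'.trans ((he i (hA hi) _ (hA hmaxC.1)).1 h2) hmaxC.2.2⟩

theorem jtNorm_comp_symm_le (hb : IsTreeOrder le) (hb' : IsTreeOrder le') (hp : 2 ≤ p)
    {e : ℕ ≃ ℕ} {S : Set ℕ} (he : IsOrderEmbeddingOn le le' e S) (hx : x.HasFiniteSupport)
    (hxS : support x ⊆ S) : jtNorm le' p (x ∘ e.symm) ≤ jtNorm le p x := by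
  classical
  refine csSup_le jtValues_nonempty ?_
  rintro _ ⟨n, t, ht, htdisj, rfl⟩
  set A := hx.toFinset
  have hA : ∀ i, i ∈ A ↔ x i ≠ 0 := fun i => Set.Finite.mem_toFinset hx
  have hAS : ↑A ⊆ S := fun i hi => hxS ((hA i).1 hi)
  let ι := {k : Fin n // ∃ i ∈ A, e i ∈ t k}
  choose a b ha hta hab hiff using fun k : ι => he.exists_segment_trace hb hb' hAS (ht k) k.2
  let s : ι → Set ℕ := fun k => {i | le (a k) i ∧ le i (b k)}
  have hnorm : ∀ k : ι, segNorm (x ∘ e.symm) (t k) = segNorm x (s k) := by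
    intro k
    rw [segNorm_comp_symm]
    refine segNorm_congr (Set.ext fun i => ?_)
    simp only [Set.mem_inter_iff, Set.mem_preimage, mem_support, ← hA]
    exact and_congr_left fun hi => (hiff k i hi).symm
  have hzero : ∀ k, (¬ ∃ i ∈ A, e i ∈ t k) → segNorm (x ∘ e.symm) (t k) = 0 := by
    intro k hk
    rw [segNorm_comp_symm, ← segNorm_empty x]
    refine segNorm_congr (Set.ext fun i => ?_)
    simp only [Set.mem_inter_iff, Set.mem_preimage, mem_support, ← hA, Set.empty_inter,
      Set.mem_empty_iff_false, iff_false, not_and]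
    exact fun hit hi => hk ⟨i, hi, hit⟩
  -- If `a k ⪯ a l` and `s k`, `s l` meet, then `a l ∈ s k`, so `e (a l) ∈ t k ∩ t l`.
  have hdisj : Pairwise (Disjoint on s) := by
    have key : ∀ k l : ι, k ≠ l → le (a k) (a l) → ∀ w ∈ s k, w ∉ s l := by
      intro k l hkl hle w hwk hwl
      have hlk : e (a l) ∈ t k := (hiff k _ (ha l)).1 ⟨hle, hb.trans hwl.1 hwk.2⟩
      exact Set.disjoint_left.1 (htdisj _ _ fun h => hkl (Subtype.ext h)) hlk (hta l)
    intro k l hkl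
    refine Set.disjoint_left.2 fun w hwk hwl => ?_
    rcases hb.pred_linear w (a k) (a l) hwk.1 hwl.1 with h | h
    · exact key k l hkl h w hwk hwl
    · exact key l k hkl.symm h w hwl hwk
  calc (∑ k, segNorm (x ∘ e.symm) (t k) ^ p) ^ (1 / p)
      = (∑ k : ι, segNorm x (s k) ^ p) ^ (1 / p) := by
        have hout : ∑ k : {k // ¬ ∃ i ∈ A, e i ∈ t k}, segNorm (x ∘ e.symm) (t k) ^ p = 0 :=
          Finset.sum_eq_zero fun k _ => by rw [hzero k k.2, Real.zero_rpow (by linarith)]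
        rw [← Fintype.sum_subtype_add_sum_subtype (fun k => ∃ i ∈ A, e i ∈ t k), hout, add_zero]
        simp only [hnorm]
        congr
    _ ≤ jtNorm le p x :=
        le_jtNorm (bddAbove_jtValues hp hx) s (fun k => ⟨a k, b k, hab k, rfl⟩) hdisj

end Transport

theorem IsOrderEmbeddingOn.symm {le le' : ℕ → ℕ → Prop} {e : ℕ ≃ ℕ} {S : Set ℕ}
    (he : IsOrderEmbeddingOn le le' e S) : IsOrderEmbeddingOn le' le e.symm (e '' S) := by
  rintro _ ⟨m, hm, rfl⟩ _ ⟨n, hn, rfl⟩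
  simpa using (he m hm n hn).symm

theorem jtNorm_indicator_comp_symm_le {le le' : ℕ → ℕ → Prop} {p : ℝ} (hb : IsTreeOrder le)
    (hb' : IsTreeOrder le') (hp : 2 ≤ p) {e : ℕ ≃ ℕ} {T : Set ℕ}
    (hT : IsOrderEmbeddingOn le le' e T) (f : ℕ →₀ ℝ) :
    jtNorm le' p (T.indicator f ∘ e.symm) ≤ jtNorm le p f := by
  have hfin : (T.indicator f).HasFiniteSupport := by
    rw [Function.HasFiniteSupport, Set.support_indicator]
    exact f.hasFiniteSupport.subset Set.inter_subset_right
  calc jtNorm le' p (T.indicator f ∘ e.symm)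
      ≤ jtNorm le p (T.indicator f) :=
        jtNorm_comp_symm_le hb hb' hp hT hfin Set.support_indicator_subset
    _ ≤ jtNorm le p f := jtNorm_le_of_abs_le hp f.hasFiniteSupport hfin fun i => by
        by_cases hi : i ∈ T <;> simp [hi]

theorem norm_domLCongr_le {le le' : ℕ → ℕ → Prop} {p : ℝ} (hb : IsTreeOrder le)
    (hb' : IsTreeOrder le') (hp : 2 ≤ p) {V V' : Type*} [SeminormedAddCommGroup V] [Module ℝ V]
    [SeminormedAddCommGroup V'] [Module ℝ V'] {J : (ℕ →₀ ℝ) →ₗ[ℝ] V} {J' : (ℕ →₀ ℝ) →ₗ[ℝ] V'}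
    (hJ : ∀ f : ℕ →₀ ℝ, ‖J f‖ = jtNorm le p f) (hJ' : ∀ f : ℕ →₀ ℝ, ‖J' f‖ = jtNorm le' p f)
    {e : ℕ ≃ ℕ} {S : Set ℕ} (hS : IsOrderEmbeddingOn le le' e S)
    (hSc : IsOrderEmbeddingOn le le' e Sᶜ) (f : ℕ →₀ ℝ) :
    ‖J' (Finsupp.domLCongr (R := ℝ) e f)‖ ≤ 2 * ‖J f‖ := by
  classical
  have hpiece : ∀ (T : Set ℕ) [DecidablePred (· ∈ T)], IsOrderEmbeddingOn le le' e T →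
      ‖J' (Finsupp.domLCongr (R := ℝ) e (f.filter (· ∈ T)))‖ ≤ ‖J f‖ := by
    intro T _ hT
    have hcoe : ⇑(Finsupp.domLCongr (R := ℝ) e (f.filter (· ∈ T))) = T.indicator f ∘ e.symm := by
      ext i
      simp [Finsupp.filter_eq_indicator]
    rw [hJ', hJ, hcoe]
    exact jtNorm_indicator_comp_symm_le hb hb' hp hT f
  calc ‖J' (Finsupp.domLCongr (R := ℝ) e f)‖
      = ‖J' (Finsupp.domLCongr (R := ℝ) e (f.filter (· ∈ S))) +
          J' (Finsupp.domLCongr (R := ℝ) e (f.filter (· ∉ S)))‖ := by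
        rw [← map_add, ← map_add, f.filter_add_filter_not (· ∈ S)]
    _ ≤ ‖J f‖ + ‖J f‖ := (norm_add_le _ _).trans (add_le_add (hpiece S hS) (hpiece Sᶜ hSc))
    _ = 2 * ‖J f‖ := by ring

theorem stmt19 (le le' : ℕ → ℕ → Prop) (hT : IsJTTree le) (hD : IsDyadicTree le')
    (p : ℝ) (hp : 2 < p)
    (X : Type*) [NormedAddCommGroup X] [NormedSpace ℝ X] [CompleteSpace X]
    (J : (ℕ →₀ ℝ) →ₗ[ℝ] X)
    (hJ : ∀ f : ℕ →₀ ℝ, ‖J f‖ = jtNorm le p (f : ℕ → ℝ))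
    (hdense : DenseRange J)
    (X' : Type*) [NormedAddCommGroup X'] [NormedSpace ℝ X'] [CompleteSpace X']
    (J' : (ℕ →₀ ℝ) →ₗ[ℝ] X')
    (hJ' : ∀ f : ℕ →₀ ℝ, ‖J' f‖ = jtNorm le' p (f : ℕ → ℝ))
    (hdense' : DenseRange J') :
    Nonempty (X ≃L[ℝ] X') := by
  obtain ⟨e, S, hS, hSc⟩ := exists_perm_isOrderEmbeddingOn_and_compl hT hD
  have hb := hT.isTreeOrder
  have hb' := hD.isTreeOrder
  refine ⟨(Finsupp.domLCongr (R := ℝ) e).extend J J' hdense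
    ⟨2, norm_domLCongr_le hb hb' hp.le hJ hJ' hS hSc⟩ hdense' ⟨2, fun g => ?_⟩⟩
  rw [Finsupp.domLCongr_symm]
  exact norm_domLCongr_le hb' hb hp.le hJ' hJ hS.symm (e.image_compl S ▸ hSc.symm) g
end
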